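/- arXiv:1806.01094 — 3 statements merged into one kernel-verified Lean document; each statement's English description precedes it below -/
import Mathlib

section
/- Let $D_1,\dots,D_m$ be real $d\times d$ diagonal matrices and for each $j\in\{1,\dots,d\}$ let $\mathbf{z}_j=(D_1(j,j),\dots,D_m(j,j))\in\mathbb{R}^m$. Suppose that for every pair $j\neq k$ the vectors $\mathbf{z}_j$ and $\mathbf{z}_k$ are nonzero and not collinear. If $M\in\mathbb{R}^{d\times d}$ is invertible and $M^\top D_i M$ is diagonal for all $i$, then $M = P\Lambda$ for some permutation matrix $P$ and invertible diagonal matrix $\Lambda$ (i.e., $M$ has exactly one nonzero entry in each row and each column). -/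
/-!
Write `Eᵢ = Mᵀ Dᵢ M`. Since `Dᵢ M = M⁻ᵀ Eᵢ` with `Dᵢ` and `Eᵢ` diagonal, the `(l, j)` entry gives
`M l j • z l = M⁻ᵀ l j • e j`, where `e j` collects the `j`-th diagonal entries of the `Eᵢ`.
So two nonzero entries `M l j`, `M l' j` in one column would make `z l` and `z l'` both multiples
of `e j`, hence collinear. A column of an invertible matrix is nonzero, so every column has exactly
one nonzero entry; these entries meet every row, since a row missing them would be zero.
-/

open Matrix

lemma exists_eq_smul_of_smul_eq_smul {K V : Type*} [Field K] [AddCommGroup V] [Module K V]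
    {u v w : V} {a b a' b' : K} (hu : a • u = b • w) (hv : a' • v = b' • w)
    (ha : a ≠ 0) (ha' : a' ≠ 0) (hv0 : v ≠ 0) : ∃ c : K, u = c • v := by
  have hb' : b' ≠ 0 := by
    rintro rfl
    simp [ha', hv0] at hv
  refine ⟨a⁻¹ * b * b'⁻¹ * a', ?_⟩
  rw [← inv_smul_smul₀ ha u, hu, ← inv_smul_smul₀ hb' w, ← hv]
  simp only [smul_smul, mul_assoc]

namespace Matrix

variable {n R : Type*} [Fintype n] [DecidableEq n]

lemma diag_mul_apply_eq_transpose_inv_mul [CommRing R] {D M : Matrix n n R} (hD : D.IsDiag)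
    (hE : (Mᵀ * D * M).IsDiag) (hM : IsUnit M) (l j : n) :
    D l l * M l j = Mᵀ⁻¹ l j * (Mᵀ * D * M) j j := by
  have hdetT : IsUnit Mᵀ.det := by rwa [det_transpose, ← isUnit_iff_isUnit_det]
  have hDM : D * M = Mᵀ⁻¹ * (Mᵀ * D * M) := by
    rw [Matrix.mul_assoc Mᵀ, nonsing_inv_mul_cancel_left _ _ hdetT]
  calc D l l * M l j = (diagonal D.diag * M) l j := (diagonal_mul _ _ _ _).symm
    _ = (Mᵀ⁻¹ * diagonal (Mᵀ * D * M).diag) l j := by rw [hD.diagonal_diag, hE.diagonal_diag, hDM]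
    _ = Mᵀ⁻¹ l j * (Mᵀ * D * M) j j := mul_diagonal _ _ _ _

lemma exists_perm_of_isUnit_of_subsingleton_col_support [CommRing R] [Nontrivial R]
    {M : Matrix n n R} (hM : IsUnit M) (hcol : ∀ j, {l | M l j ≠ 0}.Subsingleton) :
    ∃ (σ : Equiv.Perm n) (c : n → R), (∀ j, c j ≠ 0) ∧
      M = Matrix.of fun i j => if i = σ j then c j else 0 := by
  have hdet : M.det ≠ 0 := ((isUnit_iff_isUnit_det M).mp hM).ne_zero
  have hex : ∀ j, ∃ l, M l j ≠ 0 := fun j => by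
    by_contra! h
    exact hdet (det_eq_zero_of_column_eq_zero j h)
  choose f hf using hex
  have hzero : ∀ j i, i ≠ f j → M i j = 0 := fun j i hi => by
    by_contra h
    exact hi (hcol j h (hf j))
  have hsurj : Function.Surjective f := fun r => by
    by_contra! h
    exact hdet (det_eq_zero_of_row_eq_zero r fun j => hzero j r (h j).symm)
  refine ⟨Equiv.ofBijective f (Finite.surjective_iff_bijective.mp hsurj), fun j => M (f j) j, hf, ?_⟩
  ext i j
  by_cases h : i = f j
  · simp [h]
  · simp [h, hzero j i h]

end Matrix

/-- Kleinsteuber–Shen uniqueness theorem for exact joint diagonalization. -/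
theorem stmt0 {d m : ℕ} (D : Fin m → Matrix (Fin d) (Fin d) ℝ)
    (hD : ∀ i, (D i).IsDiag)
    (z : Fin d → Fin m → ℝ) (hz : ∀ j i, z j i = D i j j)
    (hnc : ∀ j k : Fin d, j ≠ k → z j ≠ 0 ∧ z k ≠ 0 ∧ ∀ c : ℝ, z j ≠ c • z k)
    (M : Matrix (Fin d) (Fin d) ℝ) (hM : IsUnit M)
    (hdiag : ∀ i, (Mᵀ * D i * M).IsDiag) :
    ∃ (σ : Equiv.Perm (Fin d)) (c : Fin d → ℝ), (∀ j, c j ≠ 0) ∧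
      M = Matrix.of fun i j => if i = σ j then c j else 0 := by
  have hrel : ∀ l j, M l j • z l = Mᵀ⁻¹ l j • fun i => (Mᵀ * D i * M) j j := fun l j => by
    ext i
    rw [Pi.smul_apply, Pi.smul_apply, smul_eq_mul, smul_eq_mul, hz, mul_comm,
      diag_mul_apply_eq_transpose_inv_mul (hD i) (hdiag i) hM]
  refine exists_perm_of_isUnit_of_subsingleton_col_support hM fun j l hl l' hl' => ?_
  by_contra hne
  obtain ⟨-, hzl', hcol⟩ := hnc l l' hne
  obtain ⟨c, hc⟩ := exists_eq_smul_of_smul_eq_smul (hrel l j) (hrel l' j) hl hl' hzl'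
  exact hcol c hc
end

section
/- Let $D_1, D_2 \in \mathbb{R}^{2\times 2}$ be diagonal matrices such that the vectors $(D_1(1,1), D_2(1,1))$ and $(D_1(2,2), D_2(2,2))$ in $\mathbb{R}^2$ are linearly independent. If $M \in \mathbb{R}^{2\times 2}$ is invertible and both $M^\top D_1 M$ and $M^\top D_2 M$ are diagonal, then $M$ is either diagonal or antidiagonal (one nonzero entry per row and column). -/
open Matrix

/-- Two-dimensional special case of joint diagonalization uniqueness. -/
theorem stmt1 (D₁ D₂ M : Matrix (Fin 2) (Fin 2) ℝ)
    (hD₁ : D₁.IsDiag) (hD₂ : D₂.IsDiag)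
    (hli : LinearIndependent ℝ ![![D₁ 0 0, D₂ 0 0], ![D₁ 1 1, D₂ 1 1]])
    (hM : IsUnit M)
    (h1 : (Mᵀ * D₁ * M).IsDiag) (h2 : (Mᵀ * D₂ * M).IsDiag) :
    (M 0 1 = 0 ∧ M 1 0 = 0) ∨ (M 0 0 = 0 ∧ M 1 1 = 0) := by
  have hd1 : D₁ 0 1 = 0 := hD₁ (by decide)
  have hd1' : D₁ 1 0 = 0 := hD₁ (by decide)
  have hd2 : D₂ 0 1 = 0 := hD₂ (by decide)
  have hd2' : D₂ 1 0 = 0 := hD₂ (by decide)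
  have e1 : (Mᵀ * D₁ * M) 0 1 = 0 := h1 (by decide)
  have e2 : (Mᵀ * D₂ * M) 0 1 = 0 := h2 (by decide)
  simp [Matrix.mul_apply, Fin.sum_univ_two, Matrix.transpose_apply, hd1, hd1'] at e1
  simp [Matrix.mul_apply, Fin.sum_univ_two, Matrix.transpose_apply, hd2, hd2'] at e2
  have key := Fintype.linearIndependent_iff.mp hli ![M 0 0 * M 0 1, M 1 0 * M 1 1]
    (by
      funext j
      fin_cases j <;>
        simp [Fin.sum_univ_two] <;> nlinarith [e1, e2])
  have hab : M 0 0 * M 0 1 = 0 := by simpa using key 0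
  have hcd : M 1 0 * M 1 1 = 0 := by simpa using key 1
  have hdet : M.det ≠ 0 := by
    simpa [isUnit_iff_ne_zero] using (Matrix.isUnit_iff_isUnit_det M).mp hM
  rw [Matrix.det_fin_two] at hdet
  rcases mul_eq_zero.mp hab with ha | hb
  · rcases mul_eq_zero.mp hcd with hc | hd
    · exfalso; apply hdet; rw [ha, hc]; ring
    · exact Or.inr ⟨ha, hd⟩
  · rcases mul_eq_zero.mp hcd with hc | hd
    · exact Or.inl ⟨hb, hc⟩
    · exfalso; apply hdet; rw [hb, hd]; ring
end

section
/- Let $X_i = AS_i + H_i$ for $i \in \{k, l\}$ with $A$ invertible, $S_i$ independent of $H_i$, and suppose $\operatorname{Cov}(H_k) = \operatorname{Cov}(H_l)$ (stationary confounding within the group). If additionally $\operatorname{Cov}(S_k)$ and $\operatorname{Cov}(S_l)$ are diagonal matrices, then with $V = A^{-1}$ the matrix $V(\operatorname{Cov}(X_k) - \operatorname{Cov}(X_l))V^\top = \operatorname{Cov}(S_k) - \operatorname{Cov}(S_l)$ is diagonal. -/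
/-!
Independence of `S` and `H` kills the cross-covariances, so `Cov(A S + H) = A Cov(S) Aᵀ + Cov(H)`.
With stationary confounding the `Cov(H)` terms cancel in the difference, and conjugating by
`V = A⁻¹` leaves `Cov(S_k) - Cov(S_l)`, a difference of diagonal matrices.
-/

open Matrix MeasureTheory ProbabilityTheory

/-- Covariance matrix `Cov(X, Y)` of two `ℝ^d`-valued random vectors. -/
noncomputable def covMat {Ω : Type*} [MeasurableSpace Ω] (μ : Measure Ω) {d : ℕ}
    (X Y : Ω → Fin d → ℝ) : Matrix (Fin d) (Fin d) ℝ :=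
  Matrix.of fun i j =>
    ∫ ω, (X ω i - ∫ ω', X ω' i ∂μ) * (Y ω j - ∫ ω', Y ω' j ∂μ) ∂μ

section CovMat

variable {Ω : Type*} [MeasurableSpace Ω] {μ : Measure Ω} {d : ℕ} {X Y Z : Ω → Fin d → ℝ}

lemma covMat_apply (i j : Fin d) :
    covMat μ X Y i j = cov[fun ω => X ω i, fun ω => Y ω j; μ] := rfl

lemma covMat_comm : covMat μ X Y = (covMat μ Y X)ᵀ := by
  ext i j
  exact covariance_comm _ _

lemma memLp_mulVec_apply (A : Matrix (Fin d) (Fin d) ℝ) (hX : ∀ i, MemLp (fun ω => X ω i) 2 μ)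
    (i : Fin d) : MemLp (fun ω => (A *ᵥ X ω) i) 2 μ := by
  simpa only [mulVec, dotProduct] using memLp_finsetSum _ fun k _ => (hX k).const_mul (A i k)

lemma covMat_add_left [IsFiniteMeasure μ] (hX : ∀ i, MemLp (fun ω => X ω i) 2 μ)
    (hY : ∀ i, MemLp (fun ω => Y ω i) 2 μ) (hZ : ∀ i, MemLp (fun ω => Z ω i) 2 μ) :
    covMat μ (fun ω => X ω + Y ω) Z = covMat μ X Z + covMat μ Y Z := by
  ext i j
  exact covariance_add_left (hX i) (hY i) (hZ j)

lemma covMat_add_right [IsFiniteMeasure μ] (hX : ∀ i, MemLp (fun ω => X ω i) 2 μ)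
    (hY : ∀ i, MemLp (fun ω => Y ω i) 2 μ) (hZ : ∀ i, MemLp (fun ω => Z ω i) 2 μ) :
    covMat μ X (fun ω => Y ω + Z ω) = covMat μ X Y + covMat μ X Z := by
  ext i j
  exact covariance_add_right (hX i) (hY j) (hZ j)

lemma covMat_mulVec_left [IsFiniteMeasure μ] (A : Matrix (Fin d) (Fin d) ℝ)
    (hX : ∀ i, MemLp (fun ω => X ω i) 2 μ) (hY : ∀ i, MemLp (fun ω => Y ω i) 2 μ) :
    covMat μ (fun ω => A *ᵥ X ω) Y = A * covMat μ X Y := by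
  ext i j
  simp only [covMat_apply, mulVec, dotProduct, mul_apply]
  rw [covariance_fun_sum_left (fun k => (hX k).const_mul (A i k)) (hY j)]
  simp only [covariance_const_mul_left]

lemma covMat_mulVec_right [IsFiniteMeasure μ] (A : Matrix (Fin d) (Fin d) ℝ)
    (hX : ∀ i, MemLp (fun ω => X ω i) 2 μ) (hY : ∀ i, MemLp (fun ω => Y ω i) 2 μ) :
    covMat μ X (fun ω => A *ᵥ Y ω) = covMat μ X Y * Aᵀ := by
  rw [covMat_comm, covMat_mulVec_left A hY hX, transpose_mul, ← covMat_comm]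

lemma ProbabilityTheory.IndepFun.covMat_eq_zero (h : IndepFun X Y μ)
    (hX : ∀ i, MemLp (fun ω => X ω i) 2 μ) (hY : ∀ i, MemLp (fun ω => Y ω i) 2 μ) :
    covMat μ X Y = 0 := by
  ext i j
  exact (h.comp (measurable_pi_apply i) (measurable_pi_apply j)).covariance_eq_zero (hX i) (hY j)

lemma covMat_mulVec_add_of_indepFun [IsFiniteMeasure μ] (A : Matrix (Fin d) (Fin d) ℝ)
    {S H : Ω → Fin d → ℝ} (hS : ∀ i, MemLp (fun ω => S ω i) 2 μ)
    (hH : ∀ i, MemLp (fun ω => H ω i) 2 μ) (hSH : IndepFun S H μ) :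
    covMat μ (fun ω => A *ᵥ S ω + H ω) (fun ω => A *ᵥ S ω + H ω)
      = A * covMat μ S S * Aᵀ + covMat μ H H := by
  have hAS := memLp_mulVec_apply A hS
  have hASH : ∀ i, MemLp (fun ω => (A *ᵥ S ω + H ω) i) 2 μ := fun i => (hAS i).add (hH i)
  rw [covMat_add_left hAS hH hASH, covMat_add_right hAS hAS hH,
    covMat_add_right hH hAS hH, covMat_mulVec_left A hS hAS, covMat_mulVec_right A hS hS,
    covMat_mulVec_left A hS hH, covMat_mulVec_right A hH hS, hSH.covMat_eq_zero hS hH,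
    hSH.symm.covMat_eq_zero hH hS]
  simp [Matrix.mul_assoc]

end CovMat

lemma Matrix.inv_mul_mul_mul_transpose_inv {n α : Type*} [Fintype n] [DecidableEq n]
    [CommRing α] {A : Matrix n n α} (hA : IsUnit A) (C : Matrix n n α) :
    A⁻¹ * (A * C * Aᵀ) * A⁻¹ᵀ = C := by
  have hdet : IsUnit A.det := (isUnit_iff_isUnit_det A).mp hA
  have hdetT : IsUnit Aᵀ.det := by rwa [det_transpose]
  rw [transpose_nonsing_inv, Matrix.mul_assoc A, nonsing_inv_mul_cancel_left A _ hdet,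
    mul_nonsing_inv_cancel_right Aᵀ _ hdetT]

theorem stmt3_general {Ω : Type*} [MeasurableSpace Ω] (μ : Measure Ω) [IsProbabilityMeasure μ]
    {d : ℕ} (Sk Sl Hk Hl : Ω → Fin d → ℝ)
    (hSk2 : ∀ i, MemLp (fun ω => Sk ω i) 2 μ)
    (hSl2 : ∀ i, MemLp (fun ω => Sl ω i) 2 μ)
    (hHk2 : ∀ i, MemLp (fun ω => Hk ω i) 2 μ)
    (hHl2 : ∀ i, MemLp (fun ω => Hl ω i) 2 μ)
    (hindepk : IndepFun Sk Hk μ) (hindepl : IndepFun Sl Hl μ)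
    (hstat : covMat μ Hk Hk = covMat μ Hl Hl)
    (hdiagk : (covMat μ Sk Sk).IsDiag) (hdiagl : (covMat μ Sl Sl).IsDiag)
    (A : Matrix (Fin d) (Fin d) ℝ) (hA : IsUnit A)
    (Xk Xl : Ω → Fin d → ℝ)
    (hXk : ∀ ω, Xk ω = A.mulVec (Sk ω) + Hk ω)
    (hXl : ∀ ω, Xl ω = A.mulVec (Sl ω) + Hl ω)
    (V : Matrix (Fin d) (Fin d) ℝ) (hV : V = A⁻¹) :
    V * (covMat μ Xk Xk - covMat μ Xl Xl) * Vᵀ = covMat μ Sk Sk - covMat μ Sl Sl ∧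
      (V * (covMat μ Xk Xk - covMat μ Xl Xl) * Vᵀ).IsDiag := by
  have hdiff :
      covMat μ Xk Xk - covMat μ Xl Xl = A * (covMat μ Sk Sk - covMat μ Sl Sl) * Aᵀ := by
    rw [funext hXk, funext hXl, covMat_mulVec_add_of_indepFun A hSk2 hHk2 hindepk,
      covMat_mulVec_add_of_indepFun A hSl2 hHl2 hindepl, hstat, Matrix.mul_sub, Matrix.sub_mul]
    abel
  have hconj :
      V * (covMat μ Xk Xk - covMat μ Xl Xl) * Vᵀ = covMat μ Sk Sk - covMat μ Sl Sl := by
    rw [hdiff, hV, Matrix.inv_mul_mul_mul_transpose_inv hA]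
  exact ⟨hconj, hconj ▸ hdiagk.sub hdiagl⟩

/-- Within a group with stationary confounding, differences of observed covariances
are diagonalized by the true unmixing matrix `V = A⁻¹`. -/
theorem stmt3 {Ω : Type*} [MeasurableSpace Ω] (μ : Measure Ω) [IsProbabilityMeasure μ]
    {d : ℕ} (Sk Sl Hk Hl : Ω → Fin d → ℝ)
    (hSkmeas : Measurable Sk) (hSlmeas : Measurable Sl)
    (hHkmeas : Measurable Hk) (hHlmeas : Measurable Hl)
    (hSk2 : ∀ i, MemLp (fun ω => Sk ω i) 2 μ)
    (hSl2 : ∀ i, MemLp (fun ω => Sl ω i) 2 μ)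
    (hHk2 : ∀ i, MemLp (fun ω => Hk ω i) 2 μ)
    (hHl2 : ∀ i, MemLp (fun ω => Hl ω i) 2 μ)
    (hindepk : IndepFun Sk Hk μ) (hindepl : IndepFun Sl Hl μ)
    (hstat : covMat μ Hk Hk = covMat μ Hl Hl)
    (hdiagk : (covMat μ Sk Sk).IsDiag) (hdiagl : (covMat μ Sl Sl).IsDiag)
    (A : Matrix (Fin d) (Fin d) ℝ) (hA : IsUnit A)
    (Xk Xl : Ω → Fin d → ℝ)
    (hXk : ∀ ω, Xk ω = A.mulVec (Sk ω) + Hk ω)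
    (hXl : ∀ ω, Xl ω = A.mulVec (Sl ω) + Hl ω)
    (V : Matrix (Fin d) (Fin d) ℝ) (hV : V = A⁻¹) :
    V * (covMat μ Xk Xk - covMat μ Xl Xl) * Vᵀ = covMat μ Sk Sk - covMat μ Sl Sl ∧
      (V * (covMat μ Xk Xk - covMat μ Xl Xl) * Vᵀ).IsDiag :=
  stmt3_general μ Sk Sl Hk Hl hSk2 hSl2 hHk2 hHl2 hindepk hindepl hstat hdiagk hdiagl A hA Xk Xl hXk
    hXl V hV
end
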